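/- Conversely, in any regular tree grammar, if a rule sequence generates the tree x(y₁,…,y_k) from nonterminal A, then its first rule is of the form A → x(B₁,…,B_k) for some nonterminals B₁,…,B_k, and the remainder of the sequence decomposes as a concatenation r̄₁, …, r̄_k where r̄_j generates y_j from B_j for each j. -/

import Mathlib

structure Rule (N : Type) (α : Type) where
  lhs : N
  sym : α
  rhs : List N
deriving DecidableEq

inductive RTree (α : Type) where
  | node : α → List (RTree α) → RTree α

def RTree.size {α : Type} : RTree α → Nat
  | .node _ ys => 1 + (ys.attach.map (fun y => RTree.size y.1)).sum
decreasing_by have := List.sizeOf_lt_of_mem y.2; simp only [RTree.node.sizeOf_spec]; omega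

def RTree.children {α : Type} : RTree α → List (RTree α)
  | .node _ ys => ys

def RTree.root {α : Type} : RTree α → α
  | .node x _ => x

def RTree.dfs {α : Type} : RTree α → List (RTree α)
  | .node x ys => (ys.attach.map (fun y => RTree.dfs y.1)).flatten ++ [.node x ys]
decreasing_by have := List.sizeOf_lt_of_mem y.2; simp only [RTree.node.sizeOf_spec]; omega

inductive GenList {N α : Type} (R : Set (Rule N α)) :
    List (Rule N α) → List N → List (RTree α) → Prop where
  | nil : GenList R [] [] []
  | step {r : Rule N α} {rs : List (Rule N α)} {stack : List N}
      {ys ts : List (RTree α)} :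
      r ∈ R →
      ys.length = r.rhs.length →
      GenList R rs (r.rhs ++ stack) (ys ++ ts) →
      GenList R (r :: rs) (r.lhs :: stack) (RTree.node r.sym ys :: ts)

def GenSeq {N α : Type} (R : Set (Rule N α)) (rs : List (Rule N α))
    (A : N) (t : RTree α) : Prop :=
  GenList R rs [A] [t]

def Lang {N α : Type} (R : Set (Rule N α)) (A : N) : Set (RTree α) :=
  {t | ∃ rs, GenSeq R rs A t}

def LangN {N α : Type} (R : Set (Rule N α)) (A : N) (n : Nat) : Set (RTree α) :=
  {t ∈ Lang R A | t.size ≤ n}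

def Deterministic {N α : Type} (R : Set (Rule N α)) : Prop :=
  ∀ r ∈ R, ∀ r' ∈ R, r.sym = r'.sym → r.rhs = r'.rhs → r = r'

def parse {N α : Type} [DecidableEq N] [DecidableEq α] (R : List (Rule N α)) :
    RTree α → Option (N × List (Rule N α))
  | RTree.node x ys => do
    let res ← ys.attach.mapM (fun y => parse R y.1)
    match R.find? (fun r => r.sym == x && r.rhs == res.map Prod.fst) with
    | some r => some (r.lhs, r :: (res.map Prod.snd).flatten)
    | none => none
decreasing_by have := List.sizeOf_lt_of_mem y.2; simp only [RTree.node.sizeOf_spec]; omega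

/-!
The first rule has to produce the root, so it is `A → x(B₁, …, B_k)` and leaves the stack
`B₁ ⋯ B_k`. Since a rule only ever rewrites the top of the stack, everything derived from `B₁`
is finished before `B₂` is touched; splitting off one nonterminal at a time cuts the rest of
the sequence into consecutive derivations of the children.
-/

namespace GenList

variable {N α : Type} {R : Set (Rule N α)}

theorem length_eq {rs : List (Rule N α)} {stack : List N} {ts : List (RTree α)}
    (h : GenList R rs stack ts) : stack.length = ts.length := by
  induction h with
  | nil => rfl
  | step _ hlen _ ih => simp_all

theorem split_append {rs : List (Rule N α)} {s₁ s₂ : List N} {t₁ t₂ : List (RTree α)}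
    (h : GenList R rs (s₁ ++ s₂) (t₁ ++ t₂)) (hlen : s₁.length = t₁.length) :
    ∃ rs₁ rs₂, rs = rs₁ ++ rs₂ ∧ GenList R rs₁ s₁ t₁ ∧ GenList R rs₂ s₂ t₂ := by
  generalize hs : s₁ ++ s₂ = stack at h
  generalize ht : t₁ ++ t₂ = ts at h
  induction h generalizing s₁ t₁ with
  | nil =>
    obtain ⟨rfl, rfl⟩ := List.append_eq_nil_iff.mp hs
    obtain ⟨rfl, rfl⟩ := List.append_eq_nil_iff.mp ht
    exact ⟨[], [], rfl, .nil, .nil⟩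
  | step hr hys h ih =>
    match s₁, t₁, hlen with
    | [], [], _ =>
      subst hs ht
      exact ⟨[], _, rfl, .nil, .step hr hys h⟩
    | B :: s₁, t :: t₁, hlen =>
      obtain ⟨rfl, rfl⟩ := List.cons_eq_cons.mp hs
      obtain ⟨rfl, rfl⟩ := List.cons_eq_cons.mp ht
      obtain ⟨rs₁, rs₂, rfl, h₁, h₂⟩ :=
        ih (s₁ := _ ++ s₁) (t₁ := _ ++ t₁) (by simp_all)
          (List.append_assoc ..) (List.append_assoc ..)
      exact ⟨_ :: rs₁, rs₂, rfl, .step hr hys h₁, h₂⟩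

theorem decompose {rs : List (Rule N α)} {Bs : List N} {ys : List (RTree α)}
    (h : GenList R rs Bs ys) :
    ∃ rss : List (List (Rule N α)), rs = rss.flatten ∧ Bs.length = rss.length ∧
      List.Forall₂ (fun (p : N × List (Rule N α)) (y : RTree α) => GenSeq R p.2 p.1 y)
        (Bs.zip rss) ys := by
  induction Bs generalizing rs ys with
  | nil =>
    cases h
    exact ⟨[], rfl, rfl, .nil⟩
  | cons B Bs ih =>
    obtain ⟨y, ys, rfl⟩ := List.exists_cons_of_length_eq_add_one h.length_eq.symm
    obtain ⟨rs₁, rs₂, rfl, h₁, h₂⟩ := split_append (s₁ := [B]) (t₁ := [y]) h rfl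
    obtain ⟨rss, rfl, hlen, hgen⟩ := ih h₂
    exact ⟨rs₁ :: rss, rfl, by simp [hlen], .cons h₁ hgen⟩

end GenList

theorem stmt9 {N alpha : Type} (R : Set (Rule N alpha))
    (rs : List (Rule N alpha)) (A : N) (x : alpha) (ys : List (RTree alpha))
    (h : GenSeq R rs A (RTree.node x ys)) :
    ∃ (Bs : List N) (rss : List (List (Rule N alpha))),
      Rule.mk A x Bs ∈ R ∧ rs = Rule.mk A x Bs :: rss.flatten ∧
      Bs.length = rss.length ∧
      List.Forall₂ (fun (p : N × List (Rule N alpha)) (y : RTree alpha) =>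
        GenSeq R p.2 p.1 y) (Bs.zip rss) ys := by
  cases h with
  | step hr _ hgen =>
    rw [List.append_nil, List.append_nil] at hgen
    obtain ⟨rss, rfl, hlen, hchildren⟩ := hgen.decompose
    exact ⟨_, rss, hr, rfl, hlen, hchildren⟩
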